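/- Correctness of the hybrid sign-recovery algorithm: let x ∈ ℝ^N (N = 2^M), let b > ∑_{k=0}^{N-1} |x_k|, define x̃ by replacing x_0 with b, let c = ‖x̃‖₂, x̄ = x̃/c, and let p_k = (ℋ(x̄)_k)² for each k. Then c√(p_k) − (b − x_0)/√N = ℋ(x)_k for all k. -/

import Mathlib

open Matrix

/-- The Hadamard matrix `H_{2^M}` with entries
`(H_N)_{k,m} = (-1)^{∑_{i=0}^{M-1} k_i m_i}`, where `k_i`, `m_i` are the binary
digits of `k` and `m`. -/
def Hmat (M : ℕ) : Matrix (Fin (2 ^ M)) (Fin (2 ^ M)) ℝ :=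
  fun k m =>
    (-1 : ℝ) ^ (∑ i ∈ Finset.range M, ((k : ℕ) / 2 ^ i % 2) * ((m : ℕ) / 2 ^ i % 2))
theorem hybrid_sign_recovery (M : ℕ) (x : Fin (2 ^ M) → ℝ) (b : ℝ)
    (hb : b > ∑ k : Fin (2 ^ M), |x k|) :
    let N : ℕ := 2 ^ M
    let H : (Fin N → ℝ) → (Fin N → ℝ) := fun v => (Real.sqrt N)⁻¹ • (Hmat M *ᵥ v)
    let x0 : Fin N := ⟨0, Nat.two_pow_pos M⟩
    let xt : Fin N → ℝ := Function.update x x0 b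
    let c : ℝ := Real.sqrt (∑ k : Fin N, (xt k) ^ 2)
    let xbar : Fin N → ℝ := c⁻¹ • xt
    let p : Fin N → ℝ := fun k => (H xbar k) ^ 2
    ∀ k : Fin N, c * Real.sqrt (p k) - (b - x x0) / Real.sqrt N = H x k := by
  intro N H x0 xt c xbar p k
  have hNpos : (0:ℝ) < (N:ℝ) := by positivity
  have hsN : (0:ℝ) < Real.sqrt N := Real.sqrt_pos.mpr hNpos
  have hb0 : 0 < b :=
    lt_of_le_of_lt (Finset.sum_nonneg fun _ _ => abs_nonneg _) hb
  have hxt0 : xt x0 = b := Function.update_self _ _ _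
  have hc : 0 < c := by
    apply Real.sqrt_pos.mpr
    refine Finset.sum_pos' (fun i _ => sq_nonneg _) ⟨x0, Finset.mem_univ _, ?_⟩
    rw [hxt0]; positivity
  have hH1 : ∀ m : Fin N, Hmat M m x0 = 1 := by
    intro m; simp [Hmat, x0]
  have habs : ∀ j m : Fin N, |Hmat M j m| = 1 := by
    intro j m
    simp [Hmat, abs_pow]
  -- linearity
  have key : (Hmat M *ᵥ xt) k - (Hmat M *ᵥ x) k = b - x x0 := by
    simp only [mulVec, dotProduct, ← Finset.sum_sub_distrib, ← mul_sub]
    rw [Finset.sum_eq_single x0]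
    · rw [hH1, hxt0, one_mul]
    · intro m _ hm
      simp [xt, Function.update_of_ne hm]
    · simp
  -- positivity
  have hpos : 0 < (Hmat M *ᵥ xt) k := by
    simp only [mulVec, dotProduct]
    rw [← Finset.add_sum_erase _ _ (Finset.mem_univ x0), hH1, hxt0, one_mul]
    have h1 : -(∑ m : Fin N, |x m|) ≤ ∑ m ∈ Finset.univ.erase x0, Hmat M k m * xt m := by
      calc -(∑ m : Fin N, |x m|)
          ≤ -(∑ m ∈ Finset.univ.erase x0, |x m|) := by
            apply neg_le_neg
            exact Finset.sum_le_sum_of_subset_of_nonneg (Finset.subset_univ _)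
              (fun _ _ _ => abs_nonneg _)
        _ = ∑ m ∈ Finset.univ.erase x0, -|x m| := by rw [Finset.sum_neg_distrib]
        _ ≤ ∑ m ∈ Finset.univ.erase x0, Hmat M k m * xt m := by
            apply Finset.sum_le_sum
            intro m hm
            have hmne : m ≠ x0 := Finset.ne_of_mem_erase hm
            have hxtm : xt m = x m := Function.update_of_ne hmne _ _
            rw [hxtm]
            have := neg_abs_le (Hmat M k m * x m)
            rwa [abs_mul, habs, one_mul] at this
    linarith
  have hHxt : H xt k = (Real.sqrt N)⁻¹ * (Hmat M *ᵥ xt) k := rfl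
  have hHxtpos : 0 < H xt k := by
    rw [hHxt]; positivity
  have hxbar : H xbar k = c⁻¹ * H xt k := by
    show (Real.sqrt N)⁻¹ * (Hmat M *ᵥ (c⁻¹ • xt)) k = c⁻¹ * ((Real.sqrt N)⁻¹ * (Hmat M *ᵥ xt) k)
    rw [Matrix.mulVec_smul]
    simp [smul_eq_mul]
    ring
  have hsqrt : Real.sqrt (p k) = c⁻¹ * H xt k := by
    show Real.sqrt ((H xbar k) ^ 2) = _
    rw [hxbar, Real.sqrt_sq (by positivity)]
  rw [hsqrt]
  have hcne : c ≠ 0 := ne_of_gt hc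
  have : c * (c⁻¹ * H xt k) = H xt k := by field_simp
  rw [this]
  have hHx : H x k = (Real.sqrt N)⁻¹ * (Hmat M *ᵥ x) k := rfl
  rw [hHxt, hHx]
  have : (Hmat M *ᵥ xt) k = (Hmat M *ᵥ x) k + (b - x x0) := by linarith
  rw [this]
  field_simp
  ring
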